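/- arXiv:2410.22357 — 6 statements merged into one kernel-verified Lean document; each statement's English description precedes it below -/
import Mathlib

section
/- Let f : ℝⁿ → ℝ be three-times continuously differentiable, let x ∈ ℝⁿ, and let u, v ∈ ℝⁿ be fixed vectors. Then the finite-difference Hessian estimator satisfies ∇̂²_{u,v,δ} f(x) → n² · u uᵀ (∇²f(x)) v vᵀ (convergence of matrices) as δ → 0⁺. -/
open scoped BigOperators

open Filter Asymptotics in
private lemma taylor2_aux {E : Type*} [NormedAddCommGroup E] [NormedSpace ℝ E]
    {f : E → ℝ} (hf : ContDiff ℝ 3 f) (x w : E) :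
    (fun h : ℝ => f (x + h • w) - f x - h • fderiv ℝ f x w
        - (h ^ 2 / 2) • fderiv ℝ (fderiv ℝ f) x w w) =o[nhdsWithin 0 (Set.Ioi 0)]
      fun h => h ^ 2 := by
  have hdiff : ∀ y ∈ interior (Set.univ : Set E), HasFDerivAt f (fderiv ℝ f y) y := fun y _ =>
    (hf.differentiable (by norm_num)).differentiableAt.hasFDerivAt
  have hx : HasFDerivWithinAt (fderiv ℝ f) (fderiv ℝ (fderiv ℝ f) x)
      (interior (Set.univ : Set E)) x := by
    have h2 : ContDiff ℝ 2 (fderiv ℝ f) := hf.fderiv_right (by norm_num)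
    exact (h2.differentiable (by norm_num)).differentiableAt.hasFDerivAt.hasFDerivWithinAt
  have H := (convex_univ (𝕜 := ℝ) (E := E)).taylor_approx_two_segment hdiff (Set.mem_univ x) hx
    (v := 0) (w := w) (by simp) (by simp)
  simpa using H

open Filter Asymptotics in
private lemma scalar_limit_aux {E : Type*} [NormedAddCommGroup E] [NormedSpace ℝ E]
    {f : E → ℝ} (hf : ContDiff ℝ 3 f) (x u v : E) :
    Tendsto (fun δ : ℝ => (f (x + δ • v + δ • u) - f (x - δ • v + δ • u)
        - f (x + δ • v - δ • u) + f (x - δ • v - δ • u)) / (4 * δ ^ 2))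
      (nhdsWithin 0 (Set.Ioi 0)) (nhds (fderiv ℝ (fderiv ℝ f) x u v)) := by
  set B := fderiv ℝ (fderiv ℝ f) x with hB
  have hsymm : B u v = B v u :=
    (hf.contDiffAt.isSymmSndFDerivAt (by norm_num)).eq u v
  have T1 := taylor2_aux hf x (v + u)
  have T2 := taylor2_aux hf x (-v + u)
  have T3 := taylor2_aux hf x (v - u)
  have T4 := taylor2_aux hf x (-v - u)
  have H := ((T1.sub T2).sub T3).add T4
  have H2 : (fun δ : ℝ => (f (x + δ • v + δ • u) - f (x - δ • v + δ • u)
        - f (x + δ • v - δ • u) + f (x - δ • v - δ • u)) - 4 * δ ^ 2 * B u v)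
      =o[nhdsWithin 0 (Set.Ioi 0)] fun δ => δ ^ 2 := by
    refine H.congr' (Filter.Eventually.of_forall fun δ => ?_) Filter.EventuallyEq.rfl
    have e1 : x + δ • (v + u) = x + δ • v + δ • u := by module
    have e2 : x + δ • (-v + u) = x - δ • v + δ • u := by module
    have e3 : x + δ • (v - u) = x + δ • v - δ • u := by module
    have e4 : x + δ • (-v - u) = x - δ • v - δ • u := by module
    simp only [e1, e2, e3, e4]
    simp only [map_add, map_sub, map_neg, ContinuousLinearMap.add_apply,
      ContinuousLinearMap.sub_apply, ContinuousLinearMap.neg_apply, smul_eq_mul]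
    rw [hsymm]
    ring
  have t0 := H2.tendsto_div_nhds_zero
  have t1 : Tendsto (fun δ : ℝ => ((f (x + δ • v + δ • u) - f (x - δ • v + δ • u)
        - f (x + δ • v - δ • u) + f (x - δ • v - δ • u)) - 4 * δ ^ 2 * B u v) / δ ^ 2 / 4
        + B u v) (nhdsWithin 0 (Set.Ioi 0)) (nhds (0 / 4 + B u v)) :=
    (t0.div_const 4).add_const _
  rw [zero_div, zero_add] at t1
  refine t1.congr' ?_
  filter_upwards [self_mem_nhdsWithin] with δ (hδ : 0 < δ)
  have hδ2 : δ ^ 2 ≠ 0 := by positivity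
  field_simp
  ring

/-- For a three-times continuously differentiable `f : ℝⁿ → ℝ`, a point `x`
and fixed directions `u, v`, the finite-difference Hessian estimator
`∇̂²_{u,v,δ} f(x) = n² [f(x+δv+δu) − f(x−δv+δu) − f(x+δv−δu) + f(x−δv−δu)]/(4δ²) · u vᵀ`
converges, as `δ → 0⁺`, to the matrix `n² · u uᵀ (∇²f(x)) v vᵀ = n² (uᵀ (∇²f(x)) v) · u vᵀ`,
where the Hessian `∇²f(x)` is the matrix `Hf` representing the second derivative of `f` at `x`. -/
theorem statement0 {n : ℕ} (f : EuclideanSpace ℝ (Fin n) → ℝ) (hf : ContDiff ℝ 3 f)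
    (x u v : EuclideanSpace ℝ (Fin n)) (Hf : Matrix (Fin n) (Fin n) ℝ)
    (hHf : ∀ w₁ w₂ : EuclideanSpace ℝ (Fin n),
      iteratedFDeriv ℝ 2 f x ![w₁, w₂] = ∑ i, ∑ j, w₁ i * Hf i j * w₂ j) :
    Filter.Tendsto
      (fun δ : ℝ =>
        ((n : ℝ) ^ 2 *
            (f (x + δ • v + δ • u) - f (x - δ • v + δ • u) - f (x + δ • v - δ • u) +
              f (x - δ • v - δ • u)) / (4 * δ ^ 2)) •
          Matrix.vecMulVec (fun i => u i) (fun j => v j))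
      (nhdsWithin 0 (Set.Ioi 0))
      (nhds (((n : ℝ) ^ 2 * ∑ i, ∑ j, u i * Hf i j * v j) •
        Matrix.vecMulVec (fun i => u i) (fun j => v j))) := by
  have hBS : fderiv ℝ (fderiv ℝ f) x u v = ∑ i, ∑ j, u i * Hf i j * v j := by
    rw [← hHf u v, iteratedFDeriv_two_apply]
    simp
  have t := (scalar_limit_aux hf x u v).const_mul ((n : ℝ) ^ 2)
  rw [hBS] at t
  have t2 : Filter.Tendsto
      (fun δ : ℝ => (n : ℝ) ^ 2 *
          (f (x + δ • v + δ • u) - f (x - δ • v + δ • u) - f (x + δ • v - δ • u) +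
            f (x - δ • v - δ • u)) / (4 * δ ^ 2))
      (nhdsWithin 0 (Set.Ioi 0))
      (nhds ((n : ℝ) ^ 2 * ∑ i, ∑ j, u i * Hf i j * v j)) := by
    refine t.congr fun δ => ?_
    ring
  exact t2.smul_const _
end

section
/- Let H ∈ ℝ^{n×n} be symmetric, g ∈ ℝⁿ, and M > 0, and let z* be a global minimizer over ℝⁿ of v_u(z) = ⟨g, z⟩ + (1/2)⟨Hz, z⟩ + (M/6)‖z‖³. Then the matrix H + (M/2)‖z*‖ I is positive semidefinite. -/
/-!
At a global minimizer `y` the gradient vanishes, `g + A y + (M/2)‖y‖ y = 0`, and with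
`B = A + (M/2)‖y‖ I` this gives the exact expansion
`v(z) - v(y) = ½⟪B (z - y), z - y⟫ + (M/12)(‖z‖ - ‖y‖)²(2‖z‖ + ‖y‖)`.
On the sphere `‖z‖ = ‖y‖` the cubic term vanishes, so `⟪B d, d⟫ ≥ 0` for every chord `d = z - y`
of that sphere, and every `w` with `⟪y, w⟫ ≠ 0` is a multiple of such a chord. For `w ⟂ y` the
cubic term along `y + t w` is `O(t³)`, so dividing by `t²` and letting `t → 0⁺` gives
`⟪B w, w⟫ ≥ 0`.
-/

open scoped RealInnerProductSpace

section CubicModel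

variable {E : Type*} [NormedAddCommGroup E] [InnerProductSpace ℝ E]

noncomputable def cubicModel (g : E) (A : E →ₗ[ℝ] E) (M : ℝ) (z : E) : ℝ :=
  ⟪g, z⟫ + 1 / 2 * ⟪A z, z⟫ + M / 6 * ‖z‖ ^ 3

theorem hasDerivAt_norm_add_smul_pow_three (z w : E) :
    HasDerivAt (fun t : ℝ => ‖z + t • w‖ ^ 3) (3 * ‖z‖ * ⟪z, w⟫) 0 := by
  have hline : HasDerivAt (fun t : ℝ => z + t • w) w 0 := by
    simpa using ((hasDerivAt_id (0 : ℝ)).smul_const w).const_add z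
  have hnorm := (hasFDerivAt_norm_rpow (z + (0 : ℝ) • w) (p := 3) (by norm_num)).comp_hasDerivAt
    (0 : ℝ) hline
  have hfun : (fun t : ℝ => ‖z + t • w‖ ^ 3) = (fun x : E => ‖x‖ ^ (3 : ℝ)) ∘ fun t => z + t • w := by
    funext t
    simp only [Function.comp_apply]
    exact_mod_cast (Real.rpow_natCast _ 3).symm
  rw [hfun]
  refine hnorm.congr_deriv ?_
  norm_num [innerSL_apply_apply, mul_assoc]

variable {g : E} {A : E →ₗ[ℝ] E} {M : ℝ}

theorem hasDerivAt_cubicModel_add_smul (hA : A.IsSymmetric) (z w : E) :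
    HasDerivAt (fun t : ℝ => cubicModel g A M (z + t • w))
      ⟪g + A z + (M / 2 * ‖z‖) • z, w⟫ 0 := by
  have hfun : (fun t : ℝ => cubicModel g A M (z + t • w)) = fun t =>
      (⟪g, z⟫ + 1 / 2 * ⟪A z, z⟫) + (⟪g, w⟫ + ⟪A z, w⟫) * t + 1 / 2 * ⟪A w, w⟫ * t ^ 2
        + M / 6 * ‖z + t • w‖ ^ 3 := by
    funext t
    simp only [cubicModel, map_add, map_smul, inner_add_left, inner_add_right, inner_smul_left,
      inner_smul_right, RCLike.conj_to_real, hA w z, real_inner_comm (A z) w]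
    ring
  rw [hfun]
  refine ((((hasDerivAt_id (0 : ℝ)).const_mul _).const_add _).add
    ((hasDerivAt_pow 2 (0 : ℝ)).const_mul _)).add
    ((hasDerivAt_norm_add_smul_pow_three z w).const_mul _) |>.congr_deriv ?_
  simp only [inner_add_left, inner_smul_left, RCLike.conj_to_real]
  ring

theorem add_apply_add_smul_eq_zero_of_isMinOn_cubicModel (hA : A.IsSymmetric) {y : E}
    (hmin : IsMinOn (cubicModel g A M) Set.univ y) :
    g + A y + (M / 2 * ‖y‖) • y = 0 := by
  set v := g + A y + (M / 2 * ‖y‖) • y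
  have hlocal : IsLocalMin (fun t : ℝ => cubicModel g A M (y + t • v)) 0 :=
    Filter.Eventually.of_forall fun t => by simpa using isMinOn_univ_iff.mp hmin (y + t • v)
  exact inner_self_eq_zero.mp (hlocal.hasDerivAt_eq_zero (hasDerivAt_cubicModel_add_smul hA y v))

theorem cubicModel_sub_cubicModel (hA : A.IsSymmetric) {y : E}
    (hy : g + A y + (M / 2 * ‖y‖) • y = 0) (z : E) :
    cubicModel g A M z - cubicModel g A M y =
      1 / 2 * ⟪(A + (M / 2 * ‖y‖) • LinearMap.id : E →ₗ[ℝ] E) (z - y), z - y⟫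
        + M / 12 * (‖z‖ - ‖y‖) ^ 2 * (2 * ‖z‖ + ‖y‖) := by
  obtain rfl : g = -(A y + (M / 2 * ‖y‖) • y) := eq_neg_of_add_eq_zero_left (by rwa [← add_assoc])
  simp only [cubicModel, LinearMap.add_apply, LinearMap.smul_apply, LinearMap.id_apply, map_sub,
    inner_add_left, inner_sub_left, inner_sub_right, inner_neg_left, inner_smul_left,
    RCLike.conj_to_real, real_inner_self_eq_norm_sq, hA y z, real_inner_comm y z,
    real_inner_comm (A z) y]
  ring

theorem inner_apply_self_nonneg_of_norm_add_eq (hA : A.IsSymmetric) {y : E}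
    (hmin : IsMinOn (cubicModel g A M) Set.univ y) {d : E} (hd : ‖y + d‖ = ‖y‖) :
    0 ≤ ⟪(A + (M / 2 * ‖y‖) • LinearMap.id : E →ₗ[ℝ] E) d, d⟫ := by
  have hdiff := cubicModel_sub_cubicModel hA
    (add_apply_add_smul_eq_zero_of_isMinOn_cubicModel hA hmin) (y + d)
  rw [hd, add_sub_cancel_left, sub_self, zero_pow two_ne_zero, mul_zero, zero_mul, add_zero]
    at hdiff
  linarith [isMinOn_univ_iff.mp hmin (y + d)]

theorem inner_apply_self_nonneg_of_inner_ne_zero (hA : A.IsSymmetric) {y : E}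
    (hmin : IsMinOn (cubicModel g A M) Set.univ y) {w : E} (hw : ⟪y, w⟫ ≠ 0) :
    0 ≤ ⟪(A + (M / 2 * ‖y‖) • LinearMap.id : E →ₗ[ℝ] E) w, w⟫ := by
  have hw0 : ‖w‖ ≠ 0 := by rintro h; simp [norm_eq_zero.mp h] at hw
  set t := -2 * ⟪y, w⟫ / ‖w‖ ^ 2
  have ht : t ≠ 0 := by positivity
  have htw : t * ‖w‖ ^ 2 = -2 * ⟪y, w⟫ := div_mul_cancel₀ _ (pow_ne_zero 2 hw0)
  have hsphere : ‖y + t • w‖ = ‖y‖ := by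
    refine (sq_eq_sq₀ (norm_nonneg _) (norm_nonneg _)).mp ?_
    rw [norm_add_sq_real, inner_smul_right, norm_smul, mul_pow, Real.norm_eq_abs, sq_abs]
    linear_combination t * htw
  have hchord := inner_apply_self_nonneg_of_norm_add_eq hA hmin hsphere
  rw [map_smul, inner_smul_left, inner_smul_right, RCLike.conj_to_real, ← mul_assoc] at hchord
  exact nonneg_of_mul_nonneg_right hchord (mul_self_pos.mpr ht)

theorem inner_apply_self_nonneg_of_inner_eq_zero (hA : A.IsSymmetric) (hM : 0 ≤ M) {y : E}
    (hmin : IsMinOn (cubicModel g A M) Set.univ y) {w : E} (hw : ⟪y, w⟫ = 0) :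
    0 ≤ ⟪(A + (M / 2 * ‖y‖) • LinearMap.id : E →ₗ[ℝ] E) w, w⟫ := by
  set Q := ⟪(A + (M / 2 * ‖y‖) • LinearMap.id : E →ₗ[ℝ] E) w, w⟫
  have hbound : ∀ t : ℝ, 0 < t → 0 ≤ Q + M / 3 * ‖w‖ ^ 3 * t := by
    intro t ht
    set r := ‖y‖
    set s := ‖y + t • w‖
    set u := t * ‖w‖
    have hu : ‖t • w‖ = u := by rw [norm_smul, Real.norm_of_nonneg ht.le]
    have hs2 : s ^ 2 = r ^ 2 + u ^ 2 := by
      rw [norm_add_sq_real, inner_smul_right, hw, hu]; ring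
    have hrs : r ≤ s := le_of_sq_le_sq (by nlinarith) (norm_nonneg _)
    have hsu : s ≤ r + u := (norm_add_le _ _).trans_eq (by rw [hu])
    have hcubic : (s - r) ^ 2 * (2 * s + r) ≤ 2 * u ^ 3 := by
      have hr : 0 ≤ r := norm_nonneg _
      calc (s - r) ^ 2 * (2 * s + r) ≤ 2 * (s - r) * ((s - r) * (s + r)) := by nlinarith
        _ = 2 * (s - r) * u ^ 2 := by linear_combination 2 * (s - r) * hs2
        _ ≤ 2 * u ^ 3 := by nlinarith
    have hdiff := cubicModel_sub_cubicModel hA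
      (add_apply_add_smul_eq_zero_of_isMinOn_cubicModel hA hmin) (y + t • w)
    rw [add_sub_cancel_left, map_smul, inner_smul_left, inner_smul_right, RCLike.conj_to_real]
      at hdiff
    have hmain : 0 ≤ t ^ 2 / 2 * (Q + M / 3 * ‖w‖ ^ 3 * t) := by
      nlinarith [isMinOn_univ_iff.mp hmin (y + t • w), mul_le_mul_of_nonneg_left hcubic hM]
    exact nonneg_of_mul_nonneg_right hmain (by positivity)
  have hlim : Filter.Tendsto (fun t : ℝ => Q + M / 3 * ‖w‖ ^ 3 * t) (nhdsWithin 0 (Set.Ioi 0))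
      (nhds Q) :=
    tendsto_nhdsWithin_of_tendsto_nhds <|
      (by fun_prop : Continuous fun t : ℝ => Q + M / 3 * ‖w‖ ^ 3 * t).tendsto' 0 Q (by simp)
  exact ge_of_tendsto hlim (eventually_nhdsWithin_of_forall hbound)

theorem isPositive_of_isMinOn_cubicModel (hA : A.IsSymmetric) (hM : 0 ≤ M) {y : E}
    (hmin : IsMinOn (cubicModel g A M) Set.univ y) :
    (A + (M / 2 * ‖y‖) • LinearMap.id : E →ₗ[ℝ] E).IsPositive := by
  refine ⟨hA.add (LinearMap.IsSymmetric.id.smul (by simp)), fun w => ?_⟩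
  rw [RCLike.re_to_real]
  by_cases hw : ⟪y, w⟫ = 0
  · exact inner_apply_self_nonneg_of_inner_eq_zero hA hM hmin hw
  · exact inner_apply_self_nonneg_of_inner_ne_zero hA hmin hw

end CubicModel

theorem inner_toEuclideanLin_self {n : ℕ} (H : Matrix (Fin n) (Fin n) ℝ)
    (z : EuclideanSpace ℝ (Fin n)) : ⟪H.toEuclideanLin z, z⟫ = ∑ i, ∑ j, z i * H i j * z j := by
  simp only [PiLp.inner_apply, Matrix.toLpLin_apply, Matrix.mulVec, dotProduct, RCLike.inner_apply,
    RCLike.conj_to_real, Finset.mul_sum, mul_assoc]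

/-- Let `H ∈ ℝ^{n×n}` be symmetric, `g ∈ ℝⁿ`, `M > 0`, and let `z*` be a global
minimizer over `ℝⁿ` of `v_u(z) = ⟨g,z⟩ + (1/2)⟨Hz,z⟩ + (M/6)‖z‖³`.  Then the matrix
`H + (M/2)‖z*‖ I` is positive semidefinite. -/
theorem statement9 {n : ℕ} (H : Matrix (Fin n) (Fin n) ℝ) (hH : H.IsSymm)
    (g : EuclideanSpace ℝ (Fin n)) (M : ℝ) (hM : 0 < M)
    (zstar : EuclideanSpace ℝ (Fin n))
    (hmin : ∀ z : EuclideanSpace ℝ (Fin n),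
      (∑ i, g i * zstar i) + (1 / 2) * (∑ i, ∑ j, zstar i * H i j * zstar j) +
          (M / 6) * ‖zstar‖ ^ 3 ≤
        (∑ i, g i * z i) + (1 / 2) * (∑ i, ∑ j, z i * H i j * z j) + (M / 6) * ‖z‖ ^ 3) :
    (H + ((M / 2) * ‖zstar‖) • (1 : Matrix (Fin n) (Fin n) ℝ)).PosSemidef := by
  have hmodel : ∀ z, cubicModel g H.toEuclideanLin M z =
      (∑ i, g i * z i) + (1 / 2) * (∑ i, ∑ j, z i * H i j * z j) + (M / 6) * ‖z‖ ^ 3 := by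
    intro z
    rw [cubicModel, inner_toEuclideanLin_self]
    simp only [PiLp.inner_apply, RCLike.inner_apply, RCLike.conj_to_real, mul_comm (z _)]
  have hsymm : H.toEuclideanLin.IsSymmetric :=
    Matrix.isSymmetric_toEuclideanLin_iff.mpr (Matrix.isHermitian_iff_isSelfAdjoint.mpr hH)
  have hpos := isPositive_of_isMinOn_cubicModel (g := g) hsymm hM.le <|
    isMinOn_univ_iff.mpr fun z => by simpa only [hmodel] using hmin z
  rwa [← Matrix.isPositive_toEuclideanLin_iff, map_add, map_smul, Matrix.toLpLin_one]
end

section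
/- Let H ∈ ℝ^{n×n} be symmetric, g ∈ ℝⁿ, and α > 0, and let z* be a global minimizer over ℝⁿ of the cubic model v(z) = ⟨g, z⟩ + (1/2)⟨Hz, z⟩ + (α/6)‖z‖³. Then the optimal value satisfies v(z*) ≤ −(α/12)‖z*‖³. -/
open scoped BigOperators

/-- Let `H ∈ ℝ^{n×n}` be symmetric, `g ∈ ℝⁿ`, `α > 0`, and let `z*` be a global
minimizer over `ℝⁿ` of the cubic model `v(z) = ⟨g,z⟩ + (1/2)⟨Hz,z⟩ + (α/6)‖z‖³`.  Then the
optimal value satisfies `v(z*) ≤ −(α/12)‖z*‖³`. -/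
theorem statement10 {n : ℕ} (H : Matrix (Fin n) (Fin n) ℝ) (hH : H.IsSymm)
    (g : EuclideanSpace ℝ (Fin n)) (α : ℝ) (hα : 0 < α)
    (zstar : EuclideanSpace ℝ (Fin n))
    (hmin : ∀ z : EuclideanSpace ℝ (Fin n),
      (∑ i, g i * zstar i) + (1 / 2) * (∑ i, ∑ j, zstar i * H i j * zstar j) +
          (α / 6) * ‖zstar‖ ^ 3 ≤
        (∑ i, g i * z i) + (1 / 2) * (∑ i, ∑ j, z i * H i j * z j) + (α / 6) * ‖z‖ ^ 3) :
    (∑ i, g i * zstar i) + (1 / 2) * (∑ i, ∑ j, zstar i * H i j * zstar j) +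
        (α / 6) * ‖zstar‖ ^ 3 ≤ -(α / 12) * ‖zstar‖ ^ 3 := by
  set S := ∑ i, g i * zstar i with hS
  set Q := ∑ i, ∑ j, zstar i * H i j * zstar j with hQdef
  set N := ‖zstar‖ with hNdef
  have hN0 : (0:ℝ) ≤ N := norm_nonneg _
  have hc0 : (0:ℝ) ≤ (α / 6) * N ^ 3 := by positivity
  -- comparison with t • zstar for t ≥ 0
  have key : ∀ t : ℝ, 0 ≤ t →
      S + (1/2) * Q + (α/6) * N^3 ≤ t * S + (1/2) * (t^2 * Q) + (α/6) * (t^3 * N^3) := by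
    intro t ht
    have h := hmin (t • zstar)
    have e1 : (∑ i, g i * (t • zstar) i) = t * S := by
      rw [hS, Finset.mul_sum]
      exact Finset.sum_congr rfl fun i _ => by
        simp [PiLp.smul_apply, smul_eq_mul]; ring
    have e2 : (∑ i, ∑ j, (t • zstar) i * H i j * (t • zstar) j) = t^2 * Q := by
      rw [hQdef, Finset.mul_sum]
      refine Finset.sum_congr rfl fun i _ => ?_
      rw [Finset.mul_sum]
      exact Finset.sum_congr rfl fun j _ => by
        simp [PiLp.smul_apply, smul_eq_mul]; ring
    have e3 : ‖t • zstar‖ ^ 3 = t^3 * N^3 := by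
      rw [norm_smul, Real.norm_eq_abs, abs_of_nonneg ht, hNdef, mul_pow]
    rw [e1, e2, e3] at h
    linarith [h]
  -- comparison with -zstar gives S ≤ 0
  have hSneg : S ≤ 0 := by
    have h := hmin (-zstar)
    have e1 : (∑ i, g i * (-zstar) i) = -S := by
      rw [hS, ← Finset.sum_neg_distrib]
      exact Finset.sum_congr rfl fun i _ => by simp [PiLp.neg_apply]
    have e2 : (∑ i, ∑ j, (-zstar) i * H i j * (-zstar) j) = Q := by
      rw [hQdef]
      refine Finset.sum_congr rfl fun i _ => Finset.sum_congr rfl fun j _ => by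
        simp [PiLp.neg_apply]
    have e3 : ‖-zstar‖ = N := by rw [norm_neg, hNdef]
    rw [e1, e2, e3] at h
    linarith
  -- stationarity-type inequality: S + Q + 3c ≤ 0 where c = (α/6)N³
  have hstat : S + Q + 3 * ((α/6) * N^3) ≤ 0 := by
    by_contra hpos
    push_neg at hpos
    set X := S + Q + 3 * ((α/6) * N^3) with hX
    set M := |Q| / 2 + 3 * ((α/6) * N^3) with hM
    have hM0 : 0 ≤ M := by
      rw [hM]; positivity
    have hbound : ∀ ε : ℝ, 0 < ε → ε < 1 → X ≤ ε * M := by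
      intro ε hε0 hε1
      have h := key (1 - ε) (by linarith)
      -- h : S + Q/2 + c ≤ (1-ε)S + (1/2)(1-ε)²Q + (α/6)(1-ε)³N³
      -- rearrange: ε * X ≤ ε² * (Q/2 + (3 - ε)c), so X ≤ ε(Q/2 + 3c - εc) ≤ εM
      have h2 : ε * X ≤ ε * (ε * (Q / 2 + (3 - ε) * ((α/6) * N^3))) := by
        rw [hX]; nlinarith [h]
      have h3 : X ≤ ε * (Q / 2 + (3 - ε) * ((α/6) * N^3)) :=
        le_of_mul_le_mul_left h2 hε0
      have h4 : Q / 2 + (3 - ε) * ((α/6) * N^3) ≤ M := by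
        rw [hM]
        have : Q / 2 ≤ |Q| / 2 := by
          have := le_abs_self Q; linarith
        nlinarith
      calc X ≤ ε * (Q / 2 + (3 - ε) * ((α/6) * N^3)) := h3
        _ ≤ ε * M := by nlinarith
    -- pick ε small enough
    have hε : ∃ ε : ℝ, 0 < ε ∧ ε < 1 ∧ ε * M < X := by
      refine ⟨min (1/2) (X / (2 * (M + 1))), ?_, ?_, ?_⟩
      · have : 0 < X / (2 * (M + 1)) := by positivity
        exact lt_min (by norm_num) this
      · exact lt_of_le_of_lt (min_le_left _ _) (by norm_num)
      · have h1 : min (1/2) (X / (2 * (M + 1))) ≤ X / (2 * (M + 1)) := min_le_right _ _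
        have h2 : min (1/2) (X / (2 * (M + 1))) * M ≤ X / (2 * (M + 1)) * M :=
          mul_le_mul_of_nonneg_right h1 hM0
        have h3 : X / (2 * (M + 1)) * M < X := by
          rw [div_mul_eq_mul_div, div_lt_iff₀ (by linarith)]
          nlinarith
        linarith
    obtain ⟨ε, hε0, hε1, hlt⟩ := hε
    exact absurd (hbound ε hε0 hε1) (not_le.mpr hlt)
  linarith
end

section
/- Let H ∈ ℝ^{n×n} be symmetric, g ∈ ℝⁿ, and M > 0. For every r ≥ 0 such that H + (Mr/2) I is positive definite, the lower bound inf_{z ∈ ℝⁿ} [⟨g, z⟩ + (1/2)⟨Hz, z⟩ + (M/6)‖z‖³] ≥ −(1/2)⟨(H + (Mr/2) I)⁻¹ g, g⟩ − (M/12) r³ holds. -/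
/-!
With `A = H + (M r / 2) I` and `u = A⁻¹ g`, completing the square gives
`⟨g, z⟩ + ½⟨A z, z⟩ = ½⟨A (z + u), z + u⟩ - ½⟨u, g⟩ ≥ -½⟨u, g⟩`, while
`⟨H z, z⟩ = ⟨A z, z⟩ - (M r / 2)‖z‖²`. The leftover `(M/6) t³ - (M r / 4) t²` with `t = ‖z‖`
is at least `-(M/12) r³`, since the difference is `(M/12)(t - r)²(2t + r)`.
-/

open Matrix

namespace Matrix

theorem IsSymm.add_dotProduct_mulVec_add {ι R : Type*} [Fintype ι] [CommRing R]
    {A : Matrix ι ι R} (hA : A.IsSymm) {u g : ι → R} (hu : A *ᵥ u = g) (z : ι → R) :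
    (z + u) ⬝ᵥ A *ᵥ (z + u) = z ⬝ᵥ A *ᵥ z + 2 * (g ⬝ᵥ z) + u ⬝ᵥ g := by
  have hcross : u ⬝ᵥ A *ᵥ z = g ⬝ᵥ z := by
    rw [dotProduct_mulVec, ← hA.eq, vecMul_transpose, hu]
  rw [mulVec_add, add_dotProduct, dotProduct_add, dotProduct_add, hu, hcross,
    dotProduct_comm z g]
  ring

theorem PosDef.neg_half_inv_mulVec_dotProduct_le {ι : Type*} [Fintype ι] [DecidableEq ι]
    {A : Matrix ι ι ℝ} (hA : A.PosDef) (g z : ι → ℝ) :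
    -(1 / 2) * (A⁻¹ *ᵥ g ⬝ᵥ g) ≤ g ⬝ᵥ z + (1 / 2) * (z ⬝ᵥ A *ᵥ z) := by
  have hsolve : A *ᵥ (A⁻¹ *ᵥ g) = g := by
    rw [mulVec_mulVec, mul_nonsing_inv A (isUnit_iff_isUnit_det A |>.mp hA.isUnit), one_mulVec]
  have hsquare := (isHermitian_iff_isSymm.mp hA.isHermitian).add_dotProduct_mulVec_add hsolve z
  have hnonneg := hA.posSemidef.dotProduct_mulVec_nonneg (z + A⁻¹ *ᵥ g)
  rw [star_trivial, hsquare] at hnonneg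
  linarith

end Matrix

theorem neg_mul_cube_le_mul_cube_sub_mul_sq {M r t : ℝ} (hM : 0 ≤ M) (hr : 0 ≤ r) (ht : 0 ≤ t) :
    -(M / 12) * r ^ 3 ≤ M / 6 * t ^ 3 - M * r / 4 * t ^ 2 := by
  have hfactor : 0 ≤ M / 12 * ((t - r) ^ 2 * (2 * t + r)) := by positivity
  linarith

theorem EuclideanSpace.dotProduct_self_eq_norm_sq {ι : Type*} [Fintype ι]
    (z : EuclideanSpace ℝ ι) : ⇑z ⬝ᵥ ⇑z = ‖z‖ ^ 2 := by
  rw [EuclideanSpace.norm_sq_eq]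
  simp only [Real.norm_eq_abs, abs_mul_abs_self, dotProduct, sq]

theorem statement11_general {n : ℕ} (H : Matrix (Fin n) (Fin n) ℝ)
    (g : EuclideanSpace ℝ (Fin n)) (M : ℝ) (hM : 0 < M) (r : ℝ) (hr : 0 ≤ r)
    (hpd : (H + (M * r / 2) • (1 : Matrix (Fin n) (Fin n) ℝ)).PosDef) :
    ∀ z : EuclideanSpace ℝ (Fin n),
      -(1 / 2) * (∑ i, ((H + (M * r / 2) • (1 : Matrix (Fin n) (Fin n) ℝ))⁻¹.mulVec
          (fun j => g j)) i * g i) - (M / 12) * r ^ 3 ≤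
        (∑ i, g i * z i) + (1 / 2) * (∑ i, ∑ j, z i * H i j * z j) + (M / 6) * ‖z‖ ^ 3 := by
  intro z
  have hquad := hpd.neg_half_inv_mulVec_dotProduct_le g z
  have hshift : ⇑z ⬝ᵥ (H + (M * r / 2) • (1 : Matrix (Fin n) (Fin n) ℝ)) *ᵥ ⇑z
      = ⇑z ⬝ᵥ H *ᵥ ⇑z + M * r / 2 * ‖z‖ ^ 2 := by
    rw [add_mulVec, smul_mulVec, one_mulVec, dotProduct_add, dotProduct_smul, smul_eq_mul,
      EuclideanSpace.dotProduct_self_eq_norm_sq]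
  have hHz : ∑ i, ∑ j, z i * H i j * z j = ⇑z ⬝ᵥ H *ᵥ ⇑z := by
    simp only [dotProduct, mulVec, Finset.mul_sum, mul_assoc]
  have hcubic := neg_mul_cube_le_mul_cube_sub_mul_sq hM.le hr (norm_nonneg z)
  rw [hHz]
  change -(1 / 2) * ((H + (M * r / 2) • 1)⁻¹ *ᵥ ⇑g ⬝ᵥ ⇑g) - _ ≤ ⇑g ⬝ᵥ ⇑z + _ + _
  linarith

/-- Let `H ∈ ℝ^{n×n}` be symmetric, `g ∈ ℝⁿ`, `M > 0`.  For every `r ≥ 0` such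
that `H + (Mr/2) I` is positive definite, every `z ∈ ℝⁿ` satisfies
`⟨g,z⟩ + (1/2)⟨Hz,z⟩ + (M/6)‖z‖³ ≥ −(1/2)⟨(H + (Mr/2) I)⁻¹ g, g⟩ − (M/12) r³`,
i.e. the stated lower bound on the infimum of the cubic model holds. -/
theorem statement11 {n : ℕ} (H : Matrix (Fin n) (Fin n) ℝ) (hH : H.IsSymm)
    (g : EuclideanSpace ℝ (Fin n)) (M : ℝ) (hM : 0 < M) (r : ℝ) (hr : 0 ≤ r)
    (hpd : (H + (M * r / 2) • (1 : Matrix (Fin n) (Fin n) ℝ)).PosDef) :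
    ∀ z : EuclideanSpace ℝ (Fin n),
      -(1 / 2) * (∑ i, ((H + (M * r / 2) • (1 : Matrix (Fin n) (Fin n) ℝ))⁻¹.mulVec
          (fun j => g j)) i * g i) - (M / 12) * r ^ 3 ≤
        (∑ i, g i * z i) + (1 / 2) * (∑ i, ∑ j, z i * H i j * z j) + (M / 6) * ‖z‖ ^ 3 :=
  statement11_general H g M hM r hr hpd
end

section
/- Let H ∈ ℝ^{n×n} be symmetric, g ∈ ℝⁿ, M > 0, and let r ∈ ℝ be such that A(r) := H + (Mr/2) I is invertible. Define z(r) := −A(r)⁻¹ g, v_u(z) := ⟨g, z⟩ + (1/2)⟨Hz, z⟩ + (M/6)‖z‖³, and v_l(r) := −(1/2)⟨A(r)⁻¹ g, g⟩ − (M/12) r³. Then the exact identity v_u(z(r)) − v_l(r) = (M/12) (r + 2‖z(r)‖) (‖z(r)‖ − r)² holds. -/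
/-!
Put `σ = M r / 2` and `A = H + σ I`, so that `A z = -g`. Pairing this with `z` gives
`⟨g, z⟩ = -(⟨H z, z⟩ + σ ‖z‖²)`, and `⟨A⁻¹ g, g⟩ = -⟨g, z⟩`. Hence the quadratic terms cancel in
`v_u(z) - v_l(r)`, leaving the cubic `(M/12)(2‖z‖³ - 3 r ‖z‖² + r³)`, which factors as
`(M/12)(r + 2‖z‖)(‖z‖ - r)²`.
-/

open Matrix

namespace Matrix

variable {ι R : Type*} [Fintype ι]

theorem sum_sum_mul_mul_eq_dotProduct_mulVec [CommSemiring R] (H : Matrix ι ι R) (z : ι → R) :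
    ∑ i, ∑ j, z i * H i j * z j = z ⬝ᵥ (H *ᵥ z) := by
  simp only [dotProduct, mulVec, Finset.mul_sum, mul_assoc]

theorem dotProduct_add_smul_one_mulVec [CommSemiring R] [DecidableEq ι] (H : Matrix ι ι R)
    (c : R) (z : ι → R) :
    z ⬝ᵥ ((H + c • 1) *ᵥ z) = z ⬝ᵥ (H *ᵥ z) + c * (z ⬝ᵥ z) := by
  rw [add_mulVec, smul_mulVec, one_mulVec, dotProduct_add, dotProduct_smul, smul_eq_mul]

variable [Field R] {A : Matrix ι ι R} {g z : ι → R}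

theorem mulVec_eq_neg_of_eq_neg_inv_mulVec [DecidableEq ι] (hA : IsUnit A.det)
    (hz : z = -(A⁻¹ *ᵥ g)) : A *ᵥ z = -g := by
  rw [hz, mulVec_neg, mulVec_mulVec, mul_nonsing_inv A hA, one_mulVec]

theorem dotProduct_eq_neg_dotProduct_mulVec_of_mulVec_eq_neg (hAz : A *ᵥ z = -g) :
    g ⬝ᵥ z = -(z ⬝ᵥ (A *ᵥ z)) := by
  rw [hAz, dotProduct_neg, neg_neg, dotProduct_comm]

end Matrix

theorem statement12_general {n : ℕ} (H : Matrix (Fin n) (Fin n) ℝ)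
    (g : EuclideanSpace ℝ (Fin n)) (M r : ℝ)
    (hinv : IsUnit (H + (M * r / 2) • (1 : Matrix (Fin n) (Fin n) ℝ)).det)
    (z : EuclideanSpace ℝ (Fin n))
    (hz : z = (EuclideanSpace.equiv (Fin n) ℝ).symm
      (-(H + (M * r / 2) • (1 : Matrix (Fin n) (Fin n) ℝ))⁻¹.mulVec (fun j => g j))) :
    ((∑ i, g i * z i) + (1 / 2) * (∑ i, ∑ j, z i * H i j * z j) + (M / 6) * ‖z‖ ^ 3) -
        (-(1 / 2) * (∑ i, ((H + (M * r / 2) • (1 : Matrix (Fin n) (Fin n) ℝ))⁻¹.mulVec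
            (fun j => g j)) i * g i) - (M / 12) * r ^ 3) =
      (M / 12) * (r + 2 * ‖z‖) * (‖z‖ - r) ^ 2 := by
  set A := H + (M * r / 2) • (1 : Matrix (Fin n) (Fin n) ℝ)
  have hz' : WithLp.ofLp z = -(A⁻¹ *ᵥ WithLp.ofLp g) := by rw [hz]; rfl
  have hgz : ∑ i, g i * z i = -(∑ i, ∑ j, z i * H i j * z j + M * r / 2 * ‖z‖ ^ 2) := by
    change WithLp.ofLp g ⬝ᵥ WithLp.ofLp z = _
    rw [dotProduct_eq_neg_dotProduct_mulVec_of_mulVec_eq_neg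
        (mulVec_eq_neg_of_eq_neg_inv_mulVec hinv hz'),
      dotProduct_add_smul_one_mulVec, sum_sum_mul_mul_eq_dotProduct_mulVec,
      EuclideanSpace.real_norm_sq_eq]
    simp only [dotProduct, sq]
  have hinvg : ∑ i, (A⁻¹ *ᵥ fun j => g j) i * g i = -∑ i, g i * z i := by
    change (A⁻¹ *ᵥ WithLp.ofLp g) ⬝ᵥ WithLp.ofLp g = -(WithLp.ofLp g ⬝ᵥ WithLp.ofLp z)
    rw [hz', dotProduct_neg, neg_neg, dotProduct_comm]
  rw [hinvg, hgz]
  ring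

/-- Let `H ∈ ℝ^{n×n}` be symmetric, `g ∈ ℝⁿ`, `M > 0`, and let `r ∈ ℝ` be such
that `A(r) = H + (Mr/2) I` is invertible.  With `z(r) = −A(r)⁻¹ g`,
`v_u(z) = ⟨g,z⟩ + (1/2)⟨Hz,z⟩ + (M/6)‖z‖³` and
`v_l(r) = −(1/2)⟨A(r)⁻¹ g, g⟩ − (M/12) r³`, the exact identity
`v_u(z(r)) − v_l(r) = (M/12)(r + 2‖z(r)‖)(‖z(r)‖ − r)²` holds. -/
theorem statement12 {n : ℕ} (H : Matrix (Fin n) (Fin n) ℝ) (hH : H.IsSymm)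
    (g : EuclideanSpace ℝ (Fin n)) (M r : ℝ) (hM : 0 < M)
    (hinv : IsUnit (H + (M * r / 2) • (1 : Matrix (Fin n) (Fin n) ℝ)).det)
    (z : EuclideanSpace ℝ (Fin n))
    (hz : z = (EuclideanSpace.equiv (Fin n) ℝ).symm
      (-(H + (M * r / 2) • (1 : Matrix (Fin n) (Fin n) ℝ))⁻¹.mulVec (fun j => g j))) :
    ((∑ i, g i * z i) + (1 / 2) * (∑ i, ∑ j, z i * H i j * z j) + (M / 6) * ‖z‖ ^ 3) -
        (-(1 / 2) * (∑ i, ((H + (M * r / 2) • (1 : Matrix (Fin n) (Fin n) ℝ))⁻¹.mulVec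
            (fun j => g j)) i * g i) - (M / 12) * r ^ 3) =
      (M / 12) * (r + 2 * ‖z‖) * (‖z‖ - r) ^ 2 :=
  statement12_general H g M r hinv z hz
end

section
/- Let H ∈ ℝ^{n×n} be symmetric with smallest eigenvalue λ_n, let g ∈ ℝⁿ and M > 0, and define for r > −2λ_n/M the function v_l(r) := −(1/2)⟨(H + (Mr/2) I)⁻¹ g, g⟩ − (M/12) r³ and z(r) := −(H + (Mr/2) I)⁻¹ g (note H + (Mr/2)I is positive definite for such r). Then v_l is differentiable at every r > −2λ_n/M with derivative v_l'(r) = (M/4)(‖z(r)‖² − r²). -/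
/-!
Write `A(s) = H + (Ms/2) I`. By homogeneity `⟨w, Hw⟩ ≥ λₙ ‖w‖²` for all `w`, so the quadratic form
of `A(s)` is at least `(λₙ + Ms/2) ‖w‖²`, which is positive for `s > −2λₙ/M`. There
`(A⁻¹)' = −A⁻¹ A' A⁻¹ = −(M/2) A⁻²`, and `⟨A⁻² g, g⟩ = ‖A⁻¹ g‖²` because `A⁻¹` is symmetric.
-/

open Matrix

theorem Matrix.mul_norm_sq_le_sum_mul_mul_of_forall_norm_eq_one {ι : Type*} [Fintype ι]
    {H : Matrix ι ι ℝ} {c : ℝ}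
    (h : ∀ w : EuclideanSpace ℝ ι, ‖w‖ = 1 → c ≤ ∑ i, ∑ j, w i * H i j * w j)
    (x : EuclideanSpace ℝ ι) : c * ‖x‖ ^ 2 ≤ ∑ i, ∑ j, x i * H i j * x j := by
  rcases eq_or_ne x 0 with rfl | hx
  · simp
  have hnorm : 0 < ‖x‖ := norm_pos_iff.2 hx
  have hunit := h (‖x‖⁻¹ • x) (norm_smul_inv_norm (𝕜 := ℝ) hx)
  have hscale : ∑ i, ∑ j, (‖x‖⁻¹ • x) i * H i j * (‖x‖⁻¹ • x) j
      = (∑ i, ∑ j, x i * H i j * x j) / ‖x‖ ^ 2 := by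
    simp only [PiLp.smul_apply, smul_eq_mul, Finset.sum_div]
    refine Finset.sum_congr rfl fun i _ => Finset.sum_congr rfl fun j _ => ?_
    field_simp
  rwa [hscale, le_div_iff₀ (by positivity)] at hunit

theorem Matrix.posDef_add_smul_one {ι : Type*} [Fintype ι] [DecidableEq ι] {H : Matrix ι ι ℝ}
    (hH : H.IsSymm) {c t : ℝ}
    (hc : ∀ x : EuclideanSpace ℝ ι, c * ‖x‖ ^ 2 ≤ ∑ i, ∑ j, x i * H i j * x j)
    (ht : 0 < c + t) : (H + t • 1).PosDef := by
  refine posDef_iff_dotProduct_mulVec.2 ⟨?_, fun x hx => ?_⟩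
  · simpa [IsHermitian, IsSymm] using hH
  have hnorm : 0 < ‖WithLp.toLp 2 x‖ := norm_pos_iff.2 (by simpa using hx)
  have hquad : star x ⬝ᵥ (H + t • 1) *ᵥ x
      = ∑ i, ∑ j, x i * H i j * x j + t * ‖WithLp.toLp 2 x‖ ^ 2 := by
    rw [EuclideanSpace.real_norm_sq_eq, star_trivial, add_mulVec, dotProduct_add,
      ← toBilin'_apply', toBilin'_apply]
    simp [smul_mulVec, dotProduct, Finset.mul_sum, sq, mul_left_comm]
  have hbound : c * ‖WithLp.toLp 2 x‖ ^ 2 ≤ ∑ i, ∑ j, x i * H i j * x j := hc _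
  rw [hquad]
  nlinarith [mul_pos ht (pow_pos hnorm 2)]

theorem Matrix.mul_mulVec_dotProduct_of_isSymm {R m : Type*} [CommSemiring R] [Fintype m]
    {B : Matrix m m R} (hB : B.IsSymm) (v : m → R) :
    (B * B) *ᵥ v ⬝ᵥ v = B *ᵥ v ⬝ᵥ B *ᵥ v := by
  rw [← mulVec_mulVec, dotProduct_comm, dotProduct_mulVec, ← mulVec_transpose, hB]

section Calculus

variable {𝕜 : Type*} [NontriviallyNormedField 𝕜] {m n : Type*} [Fintype m] [Fintype n]

theorem HasDerivAt.mulVec_dotProduct {A : 𝕜 → Matrix m n 𝕜} {A' : Matrix m n 𝕜} {r : 𝕜}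
    (hA : HasDerivAt A A' r) (v : n → 𝕜) (w : m → 𝕜) :
    HasDerivAt (fun s => A s *ᵥ v ⬝ᵥ w) (A' *ᵥ v ⬝ᵥ w) r := by
  simp only [dotProduct, mulVec, Finset.sum_mul]
  exact HasDerivAt.fun_sum fun i _ => HasDerivAt.fun_sum fun j _ =>
    ((hasDerivAt_pi.1 (hasDerivAt_pi.1 hA i) j).mul_const _).mul_const _

theorem HasDerivAt.const_add_smul_one [DecidableEq m] {f : 𝕜 → 𝕜} {f' r : 𝕜}
    (hf : HasDerivAt f f' r) (H : Matrix m m 𝕜) :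
    HasDerivAt (fun s => H + f s • (1 : Matrix m m 𝕜)) (f' • 1) r :=
  hasDerivAt_pi.2 fun i => hasDerivAt_pi.2 fun j => by
    simpa only [Matrix.add_apply, Matrix.smul_apply, smul_eq_mul] using
      (hf.mul_const ((1 : Matrix m m 𝕜) i j)).const_add (H i j)

theorem HasDerivAt.matrix_inv [CompleteSpace 𝕜] [DecidableEq m] {A : 𝕜 → Matrix m m 𝕜}
    {A' : Matrix m m 𝕜} {r : 𝕜} (hA : HasDerivAt A A' r) (hr : IsUnit (A r)) :
    HasDerivAt (fun s => (A s)⁻¹) (-((A r)⁻¹ * A' * (A r)⁻¹)) r := by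
  -- The `L∞` operator norm makes matrices a normed algebra whose topology is the product one.
  let _ : NormedRing (Matrix m m 𝕜) := Matrix.linftyOpNormedRing
  let _ : NormedAlgebra 𝕜 (Matrix m m 𝕜) := Matrix.linftyOpNormedAlgebra
  -- Instance search does not unfold this norm's uniformity to the product one, so pass it by hand.
  have _ : HasSummableGeomSeries (Matrix m m 𝕜) :=
    @instHasSummableGeomSeriesOfCompleteSpace _ _
      (by exact (inferInstance : CompleteSpace (Matrix m m 𝕜)))
  obtain ⟨u, hu⟩ := hr
  have h := (hu ▸ hasFDerivAt_ringInverse (𝕜 := 𝕜) u).comp_hasDerivAt r hA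
  simp only [Function.comp_def, ← Matrix.nonsing_inv_eq_ringInverse] at h
  refine h.congr_deriv ?_
  rw [_root_.neg_apply, ContinuousLinearMap.mulLeftRight_apply, ← hu, Matrix.coe_units_inv]

end Calculus

/-- Let `H ∈ ℝ^{n×n}` be symmetric with smallest eigenvalue
`λₙ = min_{‖w‖=1} ⟨w, Hw⟩`, let `g ∈ ℝⁿ`, `M > 0`, and for `r > −2λₙ/M` set
`v_l(r) = −(1/2)⟨(H + (Mr/2) I)⁻¹ g, g⟩ − (M/12) r³` and `z(r) = −(H + (Mr/2) I)⁻¹ g`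
(note `H + (Mr/2) I` is positive definite for such `r`).  Then `v_l` is differentiable at every
`r > −2λₙ/M` with derivative `v_l'(r) = (M/4)(‖z(r)‖² − r²)`. -/
theorem statement13 {n : ℕ} (H : Matrix (Fin n) (Fin n) ℝ) (hH : H.IsSymm)
    (g : EuclideanSpace ℝ (Fin n)) (M : ℝ) (hM : 0 < M) (lamn : ℝ)
    (hlam : IsLeast {c : ℝ | ∃ w : EuclideanSpace ℝ (Fin n),
      ‖w‖ = 1 ∧ c = ∑ i, ∑ j, w i * H i j * w j} lamn) :
    (∀ s : ℝ, -2 * lamn / M < s →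
      (H + (M * s / 2) • (1 : Matrix (Fin n) (Fin n) ℝ)).PosDef) ∧
    ∀ r : ℝ, -2 * lamn / M < r →
      HasDerivAt
        (fun s : ℝ => -(1 / 2) * (∑ i, ((H + (M * s / 2) •
            (1 : Matrix (Fin n) (Fin n) ℝ))⁻¹.mulVec (fun j => g j)) i * g i) -
          (M / 12) * s ^ 3)
        ((M / 4) * ((∑ i, (((H + (M * r / 2) •
            (1 : Matrix (Fin n) (Fin n) ℝ))⁻¹.mulVec (fun j => g j)) i) ^ 2) - r ^ 2))
        r := by
  have hbound := mul_norm_sq_le_sum_mul_mul_of_forall_norm_eq_one fun w hw => hlam.2 ⟨w, hw, rfl⟩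
  have hpos : ∀ s : ℝ, -2 * lamn / M < s → (H + (M * s / 2) • (1 : Matrix _ _ ℝ)).PosDef :=
    fun s hs => posDef_add_smul_one hH hbound (by rw [div_lt_iff₀ hM] at hs; linarith)
  refine ⟨hpos, fun r hr => ?_⟩
  have hA : HasDerivAt (fun s => H + (M * s / 2) • (1 : Matrix _ _ ℝ)) ((M / 2) • 1) r := by
    simpa using (((hasDerivAt_id' r).const_mul M).div_const 2).const_add_smul_one H
  have hB : (H + (M * r / 2) • (1 : Matrix _ _ ℝ))⁻¹.IsSymm := (hpos r hr).isHermitian.inv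
  have hderiv := ((hA.matrix_inv (hpos r hr).isUnit).mulVec_dotProduct (fun j => g j)
    (fun j => g j)).const_mul (-(1 / 2)) |>.sub ((hasDerivAt_pow 3 r).const_mul (M / 12))
  refine hderiv.congr_deriv ?_
  rw [mul_smul_comm, smul_mul_assoc, mul_one, ← neg_smul, smul_mulVec, smul_dotProduct,
    mul_mulVec_dotProduct_of_isSymm hB]
  simp only [dotProduct, smul_eq_mul, ← sq]
  ring
end
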